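/- For every integer p ≥ 1 and every real ρ > 0, the function θ ↦ B_p(θ)² − ρ·C_p(θ)² has exactly one zero in the interval (0,π]; that is, there exists a unique θ ∈ (0,π] such that B_p(θ)² = ρ·C_p(θ)². -/

import Mathlib

/-- `B_p(θ) = -(2-2cos θ)^{p+1} · ∑_{j∈ℤ} (θ+2πj)^{-2p}`. -/
noncomputable def Bp (p : ℕ) (θ : ℝ) : ℝ :=
  -(2 - 2 * Real.cos θ) ^ (p + 1) *
    ∑' j : ℤ, ((θ + 2 * Real.pi * (j : ℝ)) ^ (2 * p))⁻¹

/-- `C_p(θ) = -(2-2cos θ)^{p+1} · ∑_{j∈ℤ} (θ+2πj)^{-(2p+1)}`. -/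
noncomputable def Cp (p : ℕ) (θ : ℝ) : ℝ :=
  -(2 - 2 * Real.cos θ) ^ (p + 1) *
    ∑' j : ℤ, ((θ + 2 * Real.pi * (j : ℝ)) ^ (2 * p + 1))⁻¹

open Set

noncomputable def S (k : ℕ) (θ : ℝ) : ℝ :=
  ∑' j : ℤ, ((θ + 2 * Real.pi * (j : ℝ)) ^ k)⁻¹

noncomputable def dmin (a b : ℝ) : ℝ := min a (min Real.pi ((2 * Real.pi - b) / 2))

lemma dmin_pos {a b : ℝ} (ha : 0 < a) (hb : b < 2 * Real.pi) : 0 < dmin a b := by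
  have := Real.pi_pos
  simp only [dmin, lt_min_iff]
  refine ⟨ha, this, by linarith⟩

lemma abs_term_ge {a b : ℝ} (ha : 0 < a) (hb : b < 2 * Real.pi) {θ : ℝ}
    (hθ : θ ∈ Icc a b) (j : ℤ) :
    dmin a b * (1 + |(j : ℝ)|) ≤ |θ + 2 * Real.pi * (j : ℝ)| := by
  have hπ := Real.pi_pos
  have hd1 : dmin a b ≤ a := min_le_left _ _
  have hd2 : dmin a b ≤ Real.pi := le_trans (min_le_right _ _) (min_le_left _ _)
  have hd3 : dmin a b ≤ (2 * Real.pi - b) / 2 := le_trans (min_le_right _ _) (min_le_right _ _)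
  have hd0 : 0 < dmin a b := dmin_pos ha hb
  obtain ⟨h1, h2⟩ := hθ
  rcases lt_trichotomy j 0 with hj | hj | hj
  · have hj' : j ≤ -1 := by omega
    have hj1 : (j : ℝ) ≤ -1 := by exact_mod_cast hj'
    have habs : |(j : ℝ)| = -(j : ℝ) := abs_of_neg (by exact_mod_cast hj)
    have hneg : θ + 2 * Real.pi * (j : ℝ) < 0 := by nlinarith
    rw [abs_of_neg hneg, habs]
    nlinarith [mul_le_mul_of_nonneg_right hd3 (by linarith : (0:ℝ) ≤ 1 - (j:ℝ)),
      mul_nonneg (by linarith : (0:ℝ) ≤ Real.pi + b / 2) (by linarith : (0:ℝ) ≤ -(j:ℝ) - 1)]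
  · subst hj
    simp only [Int.cast_zero, abs_zero, mul_zero, add_zero]
    rw [abs_of_pos (by linarith)]
    nlinarith
  · have hj' : 1 ≤ j := by omega
    have hj1 : (1 : ℝ) ≤ (j : ℝ) := by exact_mod_cast hj'
    have hpos : 0 < θ + 2 * Real.pi * (j : ℝ) := by nlinarith
    rw [abs_of_pos hpos, abs_of_pos (by linarith : (0:ℝ) < (j:ℝ))]
    nlinarith [mul_le_mul_of_nonneg_right hd2 (by linarith : (0:ℝ) ≤ 1 + (j:ℝ))]

lemma term_ne_zero {θ : ℝ} (hθ1 : 0 < θ) (hθ2 : θ < 2 * Real.pi) (j : ℤ) :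
    θ + 2 * Real.pi * (j : ℝ) ≠ 0 := by
  have h := abs_term_ge hθ1 hθ2 (Set.mem_Icc.mpr ⟨le_refl θ, le_refl θ⟩) j
  have hd0 : 0 < dmin θ θ := dmin_pos hθ1 hθ2
  have : 0 < |θ + 2 * Real.pi * (j : ℝ)| := by
    refine lt_of_lt_of_le ?_ h
    have : (0:ℝ) ≤ |(j:ℝ)| := abs_nonneg _
    nlinarith
  exact abs_pos.mp this

lemma summable_one_add_abs {m : ℕ} (hm : 2 ≤ m) :
    Summable (fun j : ℤ => ((1 + |(j : ℝ)|) ^ m)⁻¹) := by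
  have h1 : Summable (fun n : ℕ => ((n : ℝ) ^ m)⁻¹) :=
    Real.summable_nat_pow_inv.mpr (by omega)
  have h2 : Summable (fun n : ℕ => ((1 + (n : ℝ)) ^ m)⁻¹) := by
    have := (summable_nat_add_iff (f := fun n : ℕ => ((n : ℝ) ^ m)⁻¹) 1).mpr h1
    refine this.congr fun n => ?_
    push_cast
    ring_nf
  refine Summable.of_nat_of_neg (h2.congr fun n => ?_) (h2.congr fun n => ?_) <;>
    simp [abs_of_nonneg, Nat.cast_nonneg]

lemma norm_term_le {a b : ℝ} (ha : 0 < a) (hb : b < 2 * Real.pi) {θ : ℝ}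
    (hθ : θ ∈ Icc a b) (m : ℕ) (j : ℤ) :
    ‖((θ + 2 * Real.pi * (j : ℝ)) ^ m)⁻¹‖ ≤
      ((dmin a b) ^ m)⁻¹ * ((1 + |(j : ℝ)|) ^ m)⁻¹ := by
  have hd0 : 0 < dmin a b := dmin_pos ha hb
  have hge := abs_term_ge ha hb hθ j
  have h1 : (0:ℝ) < 1 + |(j:ℝ)| := by positivity
  have hpos : 0 < dmin a b * (1 + |(j:ℝ)|) := by positivity
  rw [Real.norm_eq_abs, abs_inv, abs_pow, ← mul_inv, ← mul_pow]
  exact inv_anti₀ (by positivity) (pow_le_pow_left₀ (le_of_lt hpos) hge m)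

lemma summable_S {m : ℕ} (hm : 2 ≤ m) {θ : ℝ} (hθ1 : 0 < θ) (hθ2 : θ < 2 * Real.pi) :
    Summable (fun j : ℤ => ((θ + 2 * Real.pi * (j : ℝ)) ^ m)⁻¹) := by
  refine Summable.of_norm_bounded ((summable_one_add_abs hm).mul_left ((dmin θ θ ^ m)⁻¹))
    fun j => ?_
  exact norm_term_le hθ1 hθ2 (Set.mem_Icc.mpr ⟨le_refl θ, le_refl θ⟩) m j

lemma hasDerivAt_term (k : ℕ) (hk : 1 ≤ k) (c x : ℝ) (hx : x + c ≠ 0) :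
    HasDerivAt (fun y => ((y + c) ^ k)⁻¹) (-(k : ℝ) * ((x + c) ^ (k + 1))⁻¹) x := by
  have h1 : HasDerivAt (fun y : ℝ => (y + c) ^ k) ((k : ℝ) * (x + c) ^ (k - 1)) x := by
    simpa using ((hasDerivAt_id x).add_const c).fun_pow k
  have h2 := h1.inv (pow_ne_zero k hx)
  refine h2.congr_deriv ?_
  have e : ((x + c) ^ k) ^ 2 = (x + c) ^ (k + 1) * (x + c) ^ (k - 1) := by
    rw [← pow_mul, ← pow_add]
    congr 1
    omega
  rw [e]
  have h3 : (x + c) ^ (k + 1) ≠ 0 := pow_ne_zero _ hx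
  have h4 : (x + c) ^ (k - 1) ≠ 0 := pow_ne_zero _ hx
  field_simp

lemma hasDerivAt_S {k : ℕ} (hk : 2 ≤ k) {θ : ℝ} (hθ1 : 0 < θ) (hθ2 : θ < 2 * Real.pi) :
    HasDerivAt (S k) (-(k : ℝ) * S (k + 1) θ) θ := by
  have hπ := Real.pi_pos
  set a := θ / 2 with ha_def
  set b := (θ + 2 * Real.pi) / 2 with hb_def
  have ha : 0 < a := by simp [ha_def]; linarith
  have hb : b < 2 * Real.pi := by simp only [hb_def]; linarith
  have hab : a < b := by simp only [ha_def, hb_def]; linarith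
  have hmem : θ ∈ Ioo a b := ⟨by simp [ha_def]; linarith, by simp only [hb_def]; linarith⟩
  have hsub : Ioo a b ⊆ Icc a b := Ioo_subset_Icc_self
  have hd0 : 0 < dmin a b := dmin_pos ha hb
  -- nonvanishing on Ioo a b
  have hne : ∀ x ∈ Ioo a b, ∀ j : ℤ, x + 2 * Real.pi * (j : ℝ) ≠ 0 := by
    intro x hx j
    exact term_ne_zero (lt_trans ha hx.1) (lt_trans hx.2 hb) j
  -- uniform bound for derivative terms
  set u : ℤ → ℝ := fun j => (k : ℝ) * (((dmin a b) ^ (k+1))⁻¹ * ((1 + |(j : ℝ)|) ^ (k+1))⁻¹)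
    with hu_def
  have hu : Summable u := ((summable_one_add_abs (by omega : 2 ≤ k+1)).mul_left _).mul_left _
  have hbound : ∀ (j : ℤ) (x : ℝ), x ∈ Ioo a b →
      ‖-(k : ℝ) * ((x + 2 * Real.pi * (j : ℝ)) ^ (k+1))⁻¹‖ ≤ u j := by
    intro j x hx
    rw [norm_mul, norm_neg, Real.norm_natCast, hu_def]
    exact mul_le_mul_of_nonneg_left (norm_term_le ha hb (hsub hx) (k+1) j) (Nat.cast_nonneg k)
  have huni : TendstoUniformlyOn
      (fun (t : Finset ℤ) x => ∑ j ∈ t, -(k : ℝ) * ((x + 2 * Real.pi * (j : ℝ)) ^ (k+1))⁻¹)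
      (fun x => ∑' j : ℤ, -(k : ℝ) * ((x + 2 * Real.pi * (j : ℝ)) ^ (k+1))⁻¹)
      Filter.atTop (Ioo a b) :=
    tendstoUniformlyOn_tsum hu fun j x hx => hbound j x hx
  have hderiv : HasDerivAt (S k)
      (∑' j : ℤ, -(k : ℝ) * ((θ + 2 * Real.pi * (j : ℝ)) ^ (k+1))⁻¹) θ := by
    refine hasDerivAt_of_tendstoUniformlyOn
      (f := fun (t : Finset ℤ) x => ∑ j ∈ t, ((x + 2 * Real.pi * (j : ℝ)) ^ k)⁻¹)
      isOpen_Ioo huni ?_ ?_ hmem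
    · filter_upwards with t x hx
      refine HasDerivAt.fun_sum fun j _ => ?_
      exact hasDerivAt_term k (by omega) (2 * Real.pi * (j : ℝ)) x (hne x hx j)
    · intro x hx
      exact (summable_S hk (lt_trans ha hx.1) (lt_trans hx.2 hb)).hasSum
  have : (∑' j : ℤ, -(k : ℝ) * ((θ + 2 * Real.pi * (j : ℝ)) ^ (k+1))⁻¹)
      = -(k : ℝ) * S (k + 1) θ := tsum_mul_left
  rwa [this] at hderiv

lemma S_even_pos {q : ℕ} (hq : 1 ≤ q) {θ : ℝ} (hθ1 : 0 < θ) (hθ2 : θ < 2 * Real.pi) :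
    0 < S (2 * q) θ := by
  refine Summable.tsum_pos (summable_S (by omega) hθ1 hθ2) (fun j => ?_) 0 ?_
  · have : (0:ℝ) ≤ (θ + 2 * Real.pi * ((j:ℤ) : ℝ)) ^ (2 * q) := by
      rw [pow_mul]
      positivity
    exact inv_nonneg.mpr this
  · have : (0:ℝ) < (θ + 2 * Real.pi * ((0:ℤ) : ℝ)) ^ (2 * q) := by
      simp only [Int.cast_zero, mul_zero, add_zero]
      positivity
    exact inv_pos.mpr this

lemma S_odd_pi (p : ℕ) : S (2 * p + 1) Real.pi = 0 := by
  have hodd : Odd (2 * p + 1) := odd_two_mul_add_one p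
  set f : ℤ → ℝ := fun j => ((Real.pi + 2 * Real.pi * (j : ℝ)) ^ (2 * p + 1))⁻¹ with hf
  have key : ∀ j : ℤ, f (-1 - j) = -f j := by
    intro j
    simp only [hf]
    have h1 : Real.pi + 2 * Real.pi * ((-1 - j : ℤ) : ℝ)
        = -(Real.pi + 2 * Real.pi * (j : ℝ)) := by push_cast; ring
    rw [h1, hodd.neg_pow, inv_neg]
  have e : ℤ ≃ ℤ := Equiv.trans (Equiv.neg ℤ) (Equiv.subRight 1)
  have h2 : ∑' j : ℤ, f (-1 - j) = ∑' j : ℤ, f j := by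
    have := Equiv.tsum_eq (Equiv.trans (Equiv.neg ℤ) (Equiv.subRight 1)) f
    refine Eq.trans ?_ this
    apply tsum_congr
    intro j
    congr 1
    simp [Equiv.subRight, sub_eq_add_neg]
    ring
  have h3 : ∑' j : ℤ, f (-1 - j) = -∑' j : ℤ, f j := by
    rw [show (fun j : ℤ => f (-1 - j)) = fun j => -f j from funext key]  -- ?
    exact tsum_neg
  have : S (2 * p + 1) Real.pi = - S (2 * p + 1) Real.pi := by
    have := h2.symm.trans h3
    exact this  -- S = tsum f
  linarith [this]

lemma even_pow_eq_abs (t : ℝ) (q : ℕ) : t ^ (2 * q) = |t| ^ (2 * q) := by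
  rw [pow_abs, abs_of_nonneg]
  rw [pow_mul]
  positivity

set_option maxHeartbeats 1000000 in
lemma S_sq_le {p : ℕ} (hp : 1 ≤ p) {θ : ℝ} (hθ1 : 0 < θ) (hθ2 : θ < 2 * Real.pi) :
    (S (2 * p + 1) θ) ^ 2 ≤ S (2 * p) θ * S (2 * p + 2) θ := by
  have h22 : 2 * p + 2 = 2 * (p + 1) := by ring
  have hP : 0 < S (2 * p) θ := S_even_pos hp hθ1 hθ2
  have hQ : 0 < S (2 * p + 2) θ := by rw [h22]; exact S_even_pos (by omega) hθ1 hθ2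
  set P := S (2 * p) θ
  set Q := S (2 * p + 2) θ
  set lam := Real.sqrt (Q / P) with hlam_def
  have hlam : 0 < lam := Real.sqrt_pos.mpr (div_pos hQ hP)
  -- pointwise bound
  have hpt : ∀ j : ℤ, |((θ + 2 * Real.pi * (j : ℝ)) ^ (2 * p + 1))⁻¹| ≤
      (lam * ((θ + 2 * Real.pi * (j : ℝ)) ^ (2 * p))⁻¹
        + lam⁻¹ * ((θ + 2 * Real.pi * (j : ℝ)) ^ (2 * p + 2))⁻¹) / 2 := by
    intro j
    set t := θ + 2 * Real.pi * (j : ℝ) with ht_def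
    have htne : t ≠ 0 := term_ne_zero hθ1 hθ2 j
    set u := |t| with hu_def
    have hu : 0 < u := abs_pos.mpr htne
    have e1 : |(t ^ (2 * p + 1))⁻¹| = (u ^ (2 * p + 1))⁻¹ := by
      rw [abs_inv, abs_pow]
    have e2 : (t ^ (2 * p))⁻¹ = (u ^ (2 * p))⁻¹ := by rw [even_pow_eq_abs]
    have e3 : (t ^ (2 * p + 2))⁻¹ = (u ^ (2 * p + 2))⁻¹ := by
      rw [show 2 * p + 2 = 2 * (p + 1) from by ring, even_pow_eq_abs]
    rw [e1, e2, e3, pow_succ u (2 * p), show 2 * p + 2 = 2 * p + 2 from rfl,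
      pow_add u (2 * p) 2]
    have hv : 0 < u ^ (2 * p) := by positivity
    set v := u ^ (2 * p)
    have key : (lam * v⁻¹ + lam⁻¹ * (v * u ^ 2)⁻¹) / 2 - (v * u)⁻¹
        = (lam * u - 1) ^ 2 / (2 * lam * v * u ^ 2) := by
      field_simp
      ring
    nlinarith [div_nonneg (sq_nonneg (lam * u - 1))
      (by positivity : (0:ℝ) ≤ 2 * lam * v * u ^ 2), key]
  -- summability facts
  have hs1 : Summable (fun j : ℤ => ((θ + 2 * Real.pi * (j : ℝ)) ^ (2 * p + 1))⁻¹) :=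
    summable_S (by omega) hθ1 hθ2
  have hs0 : Summable (fun j : ℤ => ((θ + 2 * Real.pi * (j : ℝ)) ^ (2 * p))⁻¹) :=
    summable_S (by omega) hθ1 hθ2
  have hs2 : Summable (fun j : ℤ => ((θ + 2 * Real.pi * (j : ℝ)) ^ (2 * p + 2))⁻¹) :=
    summable_S (by omega) hθ1 hθ2
  have hs1n : Summable (fun j : ℤ => ‖((θ + 2 * Real.pi * (j : ℝ)) ^ (2 * p + 1))⁻¹‖) := by
    simp only [Real.norm_eq_abs]
    exact hs1.abs
  have habs : |S (2 * p + 1) θ| ≤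
      ∑' j : ℤ, |((θ + 2 * Real.pi * (j : ℝ)) ^ (2 * p + 1))⁻¹| := by
    have := norm_tsum_le_tsum_norm hs1n
    simp only [Real.norm_eq_abs] at this
    exact this
  have hsum_rhs : Summable (fun j : ℤ =>
      (lam * ((θ + 2 * Real.pi * (j : ℝ)) ^ (2 * p))⁻¹
        + lam⁻¹ * ((θ + 2 * Real.pi * (j : ℝ)) ^ (2 * p + 2))⁻¹) / 2) :=
    ((hs0.mul_left lam).add (hs2.mul_left lam⁻¹)).div_const 2
  have hle2 : ∑' j : ℤ, |((θ + 2 * Real.pi * (j : ℝ)) ^ (2 * p + 1))⁻¹| ≤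
      ∑' j : ℤ, (lam * ((θ + 2 * Real.pi * (j : ℝ)) ^ (2 * p))⁻¹
        + lam⁻¹ * ((θ + 2 * Real.pi * (j : ℝ)) ^ (2 * p + 2))⁻¹) / 2 :=
    Summable.tsum_le_tsum hpt (hs1.abs) hsum_rhs
  have hval : ∑' j : ℤ, (lam * ((θ + 2 * Real.pi * (j : ℝ)) ^ (2 * p))⁻¹
        + lam⁻¹ * ((θ + 2 * Real.pi * (j : ℝ)) ^ (2 * p + 2))⁻¹) / 2
      = (lam * P + lam⁻¹ * Q) / 2 := by
    rw [tsum_div_const, Summable.tsum_add (hs0.mul_left lam) (hs2.mul_left lam⁻¹),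
      tsum_mul_left, tsum_mul_left]
    rfl
  have hsqrt : (lam * P + lam⁻¹ * Q) / 2 = Real.sqrt P * Real.sqrt Q := by
    have hP' : (0:ℝ) ≤ P := hP.le
    have hQ' : (0:ℝ) ≤ Q := hQ.le
    have hsP : 0 < Real.sqrt P := Real.sqrt_pos.mpr hP
    have hsQ : 0 < Real.sqrt Q := Real.sqrt_pos.mpr hQ
    have hl : lam = Real.sqrt Q / Real.sqrt P := by
      rw [hlam_def, Real.sqrt_div hQ']
    rw [hl]
    have eP : Real.sqrt P * Real.sqrt P = P := Real.mul_self_sqrt hP'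
    have eQ : Real.sqrt Q * Real.sqrt Q = Q := Real.mul_self_sqrt hQ'
    field_simp
    nlinarith [eP, eQ]
  have hfinal : |S (2 * p + 1) θ| ≤ Real.sqrt P * Real.sqrt Q := by
    calc |S (2 * p + 1) θ| ≤ _ := habs
    _ ≤ _ := hle2
    _ = _ := hval.trans hsqrt
  have := pow_le_pow_left₀ (abs_nonneg _) hfinal 2
  rw [sq_abs] at this
  calc (S (2 * p + 1) θ) ^ 2 ≤ (Real.sqrt P * Real.sqrt Q) ^ 2 := this
  _ = P * Q := by
    rw [mul_pow, Real.sq_sqrt hP.le, Real.sq_sqrt hQ.le]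

lemma two_pi_big : (6:ℝ) < 2 * Real.pi := by nlinarith [Real.pi_gt_three]

lemma S_cont {k : ℕ} (hk : 2 ≤ k) {θ : ℝ} (hθ1 : 0 < θ) (hθ2 : θ < 2 * Real.pi) :
    ContinuousAt (S k) θ :=
  (hasDerivAt_S hk hθ1 hθ2).continuousAt

lemma mem_Ioc_sub {θ : ℝ} (hθ : θ ∈ Ioc 0 Real.pi) : 0 < θ ∧ θ < 2 * Real.pi :=
  ⟨hθ.1, lt_of_le_of_lt hθ.2 (by nlinarith [Real.pi_pos])⟩

lemma S_odd_anti {p : ℕ} (hp : 1 ≤ p) : StrictAntiOn (S (2 * p + 1)) (Ioc 0 Real.pi) := by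
  refine strictAntiOn_of_deriv_neg (convex_Ioc _ _) ?_ ?_
  · intro x hx
    obtain ⟨h1, h2⟩ := mem_Ioc_sub hx
    exact (S_cont (by omega) h1 h2).continuousWithinAt
  · intro x hx
    rw [interior_Ioc] at hx
    obtain ⟨h1, h2⟩ := mem_Ioc_sub ⟨hx.1, hx.2.le⟩
    rw [(hasDerivAt_S (by omega : 2 ≤ 2 * p + 1) h1 h2).deriv]
    have hpos : 0 < S (2 * p + 1 + 1) x := by
      rw [show 2 * p + 1 + 1 = 2 * (p + 1) from by ring]
      exact S_even_pos (by omega) h1 h2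
    have : (0:ℝ) < ((2 * p + 1 : ℕ) : ℝ) := by positivity
    exact mul_neg_of_neg_of_pos (by linarith) hpos

lemma S_odd_pos {p : ℕ} (hp : 1 ≤ p) {θ : ℝ} (h1 : 0 < θ) (h2 : θ < Real.pi) :
    0 < S (2 * p + 1) θ := by
  have := S_odd_anti hp (Set.mem_Ioc.mpr ⟨h1, h2.le⟩)
    (Set.mem_Ioc.mpr ⟨Real.pi_pos, le_refl _⟩) h2
  rwa [S_odd_pi] at this

lemma S_odd_nonneg {p : ℕ} (hp : 1 ≤ p) {θ : ℝ} (hθ : θ ∈ Ioc 0 Real.pi) :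
    0 ≤ S (2 * p + 1) θ := by
  rcases eq_or_lt_of_le hθ.2 with h | h
  · rw [h, S_odd_pi]
  · exact (S_odd_pos hp hθ.1 h).le

/-- the ratio function -/
noncomputable def hratio (p : ℕ) (θ : ℝ) : ℝ := S (2 * p + 1) θ / S (2 * p) θ

lemma hratio_pi (p : ℕ) : hratio p Real.pi = 0 := by
  rw [hratio, S_odd_pi, zero_div]

lemma hratio_contAt {p : ℕ} (hp : 1 ≤ p) {θ : ℝ} (h1 : 0 < θ) (h2 : θ < 2 * Real.pi) :
    ContinuousAt (hratio p) θ :=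
  (S_cont (by omega) h1 h2).div (S_cont (by omega) h1 h2)
    (ne_of_gt (S_even_pos hp h1 h2))

lemma hratio_hasDeriv {p : ℕ} (hp : 1 ≤ p) {θ : ℝ} (h1 : 0 < θ) (h2 : θ < 2 * Real.pi) :
    HasDerivAt (hratio p)
      ((-((2 * p + 1 : ℕ) : ℝ) * S (2 * p + 1 + 1) θ * S (2 * p) θ
        - S (2 * p + 1) θ * (-((2 * p : ℕ) : ℝ) * S (2 * p + 1) θ)) / S (2 * p) θ ^ 2) θ :=
  (hasDerivAt_S (by omega) h1 h2).div (hasDerivAt_S (by omega) h1 h2)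
    (ne_of_gt (S_even_pos hp h1 h2))

lemma hratio_anti {p : ℕ} (hp : 1 ≤ p) : StrictAntiOn (hratio p) (Ioc 0 Real.pi) := by
  refine strictAntiOn_of_deriv_neg (convex_Ioc _ _) ?_ ?_
  · intro x hx
    obtain ⟨h1, h2⟩ := mem_Ioc_sub hx
    exact (hratio_contAt hp h1 h2).continuousWithinAt
  · intro x hx
    rw [interior_Ioc] at hx
    obtain ⟨h1, h2⟩ := mem_Ioc_sub ⟨hx.1, hx.2.le⟩
    rw [(hratio_hasDeriv hp h1 h2).deriv]
    have hs0 : 0 < S (2 * p) x := S_even_pos hp h1 h2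
    have hs2 : 0 < S (2 * p + 1 + 1) x := by
      rw [show 2 * p + 1 + 1 = 2 * (p + 1) from by ring]
      exact S_even_pos (by omega) h1 h2
    have hsq : (S (2 * p + 1) x) ^ 2 ≤ S (2 * p) x * S (2 * p + 2) x := S_sq_le hp h1 h2
    rw [show 2 * p + 1 + 1 = 2 * p + 2 from by ring] at hs2
    refine div_neg_of_neg_of_pos ?_ (by positivity)
    have hc1 : ((2 * p + 1 : ℕ) : ℝ) = 2 * (p:ℝ) + 1 := by push_cast; ring
    have hc2 : ((2 * p : ℕ) : ℝ) = 2 * (p:ℝ) := by push_cast; ring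
    rw [show (2 * p + 1 + 1) = 2 * p + 2 from by ring, hc1, hc2]
    nlinarith [mul_pos hs0 hs2, mul_le_mul_of_nonneg_left hsq (by positivity : (0:ℝ) ≤ 2 * (p:ℝ))]

noncomputable def Kc : ℝ := ∑' j : ℤ, ((3 * (j : ℝ)) ^ 2)⁻¹

lemma Kc_summable : Summable (fun j : ℤ => ((3 * (j : ℝ)) ^ 2)⁻¹) := by
  have h : Summable (fun j : ℤ => 1 / ((j : ℝ)) ^ 2) := Real.summable_one_div_int_pow.mpr one_lt_two
  refine (h.mul_left (9⁻¹ : ℝ)).congr fun j => ?_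
  rw [mul_pow, mul_inv, one_div]
  norm_num

lemma Kc_nonneg : 0 ≤ Kc := tsum_nonneg fun j => by positivity

lemma S_tail_bound {m : ℕ} (hm : 2 ≤ m) {θ : ℝ} (hθ1 : 0 < θ) (hθ2 : θ ≤ 1) :
    |S m θ - (θ ^ m)⁻¹| ≤ Kc := by
  have h2π : θ < 2 * Real.pi := lt_of_le_of_lt hθ2 (by linarith [two_pi_big])
  have hsum := summable_S hm hθ1 h2π
  classical
  have hsplit := Summable.tsum_eq_add_tsum_ite hsum 0
  have h0 : ((θ + 2 * Real.pi * ((0:ℤ) : ℝ)) ^ m)⁻¹ = (θ ^ m)⁻¹ := by norm_num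
  -- the ite-sum
  set g : ℤ → ℝ := fun j => if j = 0 then 0 else ((θ + 2 * Real.pi * (j : ℝ)) ^ m)⁻¹ with hg
  have hSg : S m θ - (θ ^ m)⁻¹ = ∑' j : ℤ, g j := by
    rw [show S m θ = _ from hsplit, h0]; ring_nf
  have hgsum : Summable g := by
    have := hsum.indicator ({0}ᶜ : Set ℤ)
    refine this.congr fun j => ?_
    by_cases h : j = 0 <;> simp [hg, h, Set.indicator]
  have hbound : ∀ j : ℤ, |g j| ≤ ((3 * (j : ℝ)) ^ 2)⁻¹ := by
    intro j
    by_cases h : j = 0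
    · simp [hg, h]
    · have hj1 : (1:ℝ) ≤ |(j:ℝ)| := by
        have : (1:ℤ) ≤ |j| := Int.one_le_abs (by omega)
        calc (1:ℝ) ≤ ((|j| : ℤ) : ℝ) := by exact_mod_cast this
        _ = |(j:ℝ)| := by push_cast; ring
      set t := θ + 2 * Real.pi * (j : ℝ) with ht
      have habs : 3 * |(j:ℝ)| ≤ |t| := by
        have hπ := Real.pi_gt_three
        rcases lt_trichotomy j 0 with hj | hj | hj
        · have hjr : (j:ℝ) ≤ -1 := by exact_mod_cast (by omega : j ≤ -1)
          have hneg : t < 0 := by nlinarith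
          rw [abs_of_neg hneg, abs_of_neg (by linarith : (j:ℝ) < 0)]
          nlinarith
        · exact absurd hj h
        · have hjr : (1:ℝ) ≤ (j:ℝ) := by exact_mod_cast (by omega : 1 ≤ j)
          have hpos : 0 < t := by nlinarith
          rw [abs_of_pos hpos, abs_of_pos (by linarith : (0:ℝ) < (j:ℝ))]
          nlinarith
      have ht3 : (3:ℝ) ≤ |t| := le_trans (by nlinarith) habs
      have hgj : |g j| = (|t| ^ m)⁻¹ := by
        simp only [hg, if_neg h, abs_inv, abs_pow, ht]
      rw [hgj]
      have h1 : |t| ^ 2 ≤ |t| ^ m := pow_le_pow_right₀ (by linarith) hm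
      have h2 : (3 * |(j:ℝ)|) ^ 2 ≤ |t| ^ 2 :=
        pow_le_pow_left₀ (by positivity) habs 2
      have h3 : ((3:ℝ) * (j:ℝ)) ^ 2 = (3 * |(j:ℝ)|) ^ 2 := by
        rw [mul_pow, mul_pow, sq_abs]
      rw [h3]
      exact inv_anti₀ (by positivity) (le_trans h2 h1)
  have : |∑' j : ℤ, g j| ≤ Kc := by
    calc |∑' j : ℤ, g j| ≤ ∑' j : ℤ, |g j| := by
          have := norm_tsum_le_tsum_norm (by simpa [Real.norm_eq_abs] using hgsum.abs :
            Summable fun j : ℤ => ‖g j‖)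
          simpa [Real.norm_eq_abs] using this
    _ ≤ ∑' j : ℤ, ((3 * (j : ℝ)) ^ 2)⁻¹ := Summable.tsum_le_tsum hbound hgsum.abs Kc_summable
    _ = Kc := rfl
  rwa [hSg]

lemma key_iff {p : ℕ} (hp : 1 ≤ p) {ρ : ℝ} (hρ : 0 < ρ) {θ : ℝ}
    (hθ : θ ∈ Ioc 0 Real.pi) :
    (Bp p θ ^ 2 = ρ * Cp p θ ^ 2) ↔ hratio p θ = (Real.sqrt ρ)⁻¹ := by
  obtain ⟨h1, h2⟩ := mem_Ioc_sub hθ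
  have hS0 : 0 < S (2 * p) θ := S_even_pos hp h1 h2
  have hS1nn : 0 ≤ S (2 * p + 1) θ := S_odd_nonneg hp hθ
  have hcos : Real.cos θ < 1 := by
    have := Real.cos_lt_cos_of_nonneg_of_le_pi (le_refl 0) hθ.2 hθ.1
    simpa using this
  have hA : 0 < (2 - 2 * Real.cos θ) ^ (p + 1) := by
    have : 0 < 2 - 2 * Real.cos θ := by linarith
    positivity
  have hsρ : 0 < Real.sqrt ρ := Real.sqrt_pos.mpr hρ
  have hB : Bp p θ = -(2 - 2 * Real.cos θ) ^ (p + 1) * S (2 * p) θ := rfl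
  have hC : Cp p θ = -(2 - 2 * Real.cos θ) ^ (p + 1) * S (2 * p + 1) θ := rfl
  rw [hB, hC]
  set A := (2 - 2 * Real.cos θ) ^ (p + 1) with hA_def
  set S0 := S (2 * p) θ
  set S1 := S (2 * p + 1) θ
  constructor
  · intro heq
    have h' : A ^ 2 * S0 ^ 2 = A ^ 2 * (ρ * S1 ^ 2) := by linear_combination heq
    have h2' : S0 ^ 2 = ρ * S1 ^ 2 := mul_left_cancel₀ (by positivity) h'
    have hS1pos : 0 < S1 := by
      rcases hS1nn.lt_or_eq with h | h
      · exact h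
      · exfalso
        have hs1 : S1 = 0 := h.symm
        rw [hs1] at h2'
        simp at h2'
        nlinarith
    have hgoal : S0 = Real.sqrt ρ * S1 := by
      have h3 : S0 ^ 2 = (Real.sqrt ρ * S1) ^ 2 := by
        rw [mul_pow, Real.sq_sqrt hρ.le]; exact h2'
      have h4 : 0 < Real.sqrt ρ * S1 := by positivity
      rw [← Real.sqrt_sq hS0.le, h3, Real.sqrt_sq h4.le]
    rw [hratio]
    show S1 / S0 = (Real.sqrt ρ)⁻¹
    rw [hgoal]
    field_simp
  · intro heq
    have heq' : S1 / S0 = (Real.sqrt ρ)⁻¹ := heq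
    rw [div_eq_iff (ne_of_gt hS0)] at heq'
    have hsq' : ρ * ((Real.sqrt ρ)⁻¹) ^ 2 = 1 := by
      rw [inv_pow, Real.sq_sqrt hρ.le]
      field_simp
    rw [heq']
    linear_combination (-(A ^ 2 * S0 ^ 2)) * hsq'

/-- For every `p ≥ 1` and `ρ > 0`, there is a unique `θ ∈ (0,π]` with
`B_p(θ)² = ρ·C_p(θ)²`. -/
theorem unique_zero_in_Ioc (p : ℕ) (hp : 1 ≤ p) (ρ : ℝ) (hρ : 0 < ρ) :
    ∃! θ : ℝ, θ ∈ Set.Ioc (0 : ℝ) Real.pi ∧ Bp p θ ^ 2 = ρ * Cp p θ ^ 2 := by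
  have hπ3 := Real.pi_gt_three
  set c := (Real.sqrt ρ)⁻¹ with hc_def
  have hc : 0 < c := inv_pos.mpr (Real.sqrt_pos.mpr hρ)
  have hKc := Kc_nonneg
  set D := c + Kc * (1 + c) + 1 with hD_def
  have hD1 : 1 ≤ D := by nlinarith
  have hDpos : 0 < D := by linarith
  set θ₁ := D⁻¹ with hθ₁_def
  have hθ₁pos : 0 < θ₁ := inv_pos.mpr hDpos
  have hθ₁le1 : θ₁ ≤ 1 := inv_le_one_of_one_le₀ hD1
  have hθ₁ltπ : θ₁ < Real.pi := by linarith
  have hθ₁lt2π : θ₁ < 2 * Real.pi := by linarith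
  have hb1 := S_tail_bound (m := 2 * p + 1) (by omega) hθ₁pos hθ₁le1
  have hb0 := S_tail_bound (m := 2 * p) (by omega) hθ₁pos hθ₁le1
  have hS0pos : 0 < S (2 * p) θ₁ := S_even_pos hp hθ₁pos hθ₁lt2π
  obtain ⟨hb1l, _⟩ := abs_le.mp hb1
  obtain ⟨_, hb0r⟩ := abs_le.mp hb0
  have hA1 : 1 ≤ (θ₁ ^ (2 * p))⁻¹ :=
    (one_le_inv₀ (pow_pos hθ₁pos _)).mpr (pow_le_one₀ hθ₁pos.le hθ₁le1)
  have hpow : (θ₁ ^ (2 * p + 1))⁻¹ = (θ₁ ^ (2 * p))⁻¹ * D := by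
    rw [pow_succ, mul_inv, hθ₁_def, inv_inv]
  rw [hpow] at hb1l
  set A := (θ₁ ^ (2 * p))⁻¹
  have hc_lt : c * S (2 * p) θ₁ < S (2 * p + 1) θ₁ := by
    nlinarith [mul_le_mul_of_nonneg_left hb0r hc.le,
      mul_nonneg (sub_nonneg.mpr hA1) hKc,
      mul_nonneg (mul_nonneg (sub_nonneg.mpr hA1) hKc) hc.le]
  have hrθ₁ : c < hratio p θ₁ := by
    rw [hratio, lt_div_iff₀ hS0pos]
    linarith
  have hcont : ContinuousOn (hratio p) (Icc θ₁ Real.pi) := by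
    intro x hx
    exact (hratio_contAt hp (lt_of_lt_of_le hθ₁pos hx.1)
      (lt_of_le_of_lt hx.2 (by linarith))).continuousWithinAt
  have hmemc : c ∈ Icc (hratio p Real.pi) (hratio p θ₁) := by
    rw [hratio_pi]
    exact ⟨hc.le, hrθ₁.le⟩
  obtain ⟨θ₀, hθ₀mem, hθ₀val⟩ := intermediate_value_Icc' hθ₁ltπ.le hcont hmemc
  have hθ₀Ioc : θ₀ ∈ Ioc (0:ℝ) Real.pi := ⟨lt_of_lt_of_le hθ₁pos hθ₀mem.1, hθ₀mem.2⟩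
  refine ⟨θ₀, ⟨hθ₀Ioc, (key_iff hp hρ hθ₀Ioc).mpr hθ₀val⟩, ?_⟩
  rintro y ⟨hymem, hyeq⟩
  exact (hratio_anti hp).injOn hymem hθ₀Ioc
    (((key_iff hp hρ hymem).mp hyeq).trans hθ₀val.symm)
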